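/- Let T be a triangulation of S with |S| = n, let m ≥ 1 be an integer, and suppose the outerplanar index of T is at least m + 2. Then: (a) there exists an index i with 2 ≤ i ≤ m + 1 such that layer i of T has at most ⌊n/m⌋ vertices; (b) letting i* be the smallest such index, every layer j with 2 ≤ j < i* has at least ⌊n/m⌋ + 1 vertices; and (c) every path in the graph T from a vertex of layer 1 to a vertex of layer index strictly greater than i* passes through a vertex of layer i*, i.e., the vertex set of layer i* separates the outermost layer from all deeper layers. -/

import Mathlib

open scoped Classical

noncomputable section

/-- The plane. -/
abbrev Pt : Type := EuclideanSpace ℝ (Fin 2)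

/-- The closed segment corresponding to an unordered pair of points. -/
def segOf : Sym2 Pt → Set Pt :=
  Sym2.lift ⟨fun p q => segment ℝ p q, fun p q => segment_symm ℝ p q⟩

/-- The union of all segments of an edge set. -/
def graphUnion (E : Set (Sym2 Pt)) : Set Pt := ⋃ e ∈ E, segOf e

/-- A plane straight-line graph on the point set `S`: edges are nondegenerate segments with
endpoints in `S`, and any two distinct segments intersect in at most a common endpoint. -/
def IsPlaneGraph (S : Set Pt) (E : Set (Sym2 Pt)) : Prop :=
  (∀ e ∈ E, ¬ e.IsDiag) ∧
  (∀ e ∈ E, ∀ p ∈ e, p ∈ S) ∧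
  (∀ e ∈ E, ∀ f ∈ E, e ≠ f → segOf e ∩ segOf f ⊆ {p | p ∈ e ∧ p ∈ f})

/-- A triangulation of `S`: a maximal plane straight-line graph on `S`. -/
def IsTriangulation (S : Set Pt) (E : Set (Sym2 Pt)) : Prop :=
  IsPlaneGraph S E ∧
  ∀ p ∈ S, ∀ q ∈ S, p ≠ q → IsPlaneGraph S (insert s(p, q) E) → s(p, q) ∈ E

/-- General position: no three distinct points of `S` are collinear. -/
def GenPos (S : Set Pt) : Prop :=
  ∀ p ∈ S, ∀ q ∈ S, ∀ r ∈ S, p ≠ q → p ≠ r → q ≠ r →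
    ¬ Collinear ℝ ({p, q, r} : Set Pt)

/-- The unbounded face of a plane set `U`: the union of the unbounded connected components
of the complement of `U`. -/
def outerFace (U : Set Pt) : Set Pt :=
  {x | x ∉ U ∧ ¬ Bornology.IsBounded (connectedComponentIn Uᶜ x)}

/-- The vertices of the plane graph `(S, E)` incident to the unbounded face. -/
def outerVerts (S : Set Pt) (E : Set (Sym2 Pt)) : Set Pt :=
  {v ∈ S | v ∈ closure (outerFace (graphUnion E))}

/-- The edges of the plane graph `(S, E)` incident to the unbounded face. -/
def outerEdges (S : Set Pt) (E : Set (Sym2 Pt)) : Set (Sym2 Pt) :=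
  {e ∈ E | segOf e ⊆ closure (outerFace (graphUnion E))}

/-- Remove the outermost (cactus) layer: delete the vertices incident to the unbounded face
together with all edges incident to them. -/
def peel : Set Pt × Set (Sym2 Pt) → Set Pt × Set (Sym2 Pt) :=
  fun G => (G.1 \ outerVerts G.1 G.2, {e ∈ G.2 | ∀ p ∈ e, p ∉ outerVerts G.1 G.2})

/-- The vertices of the `i`-th cactus layer (`i ≥ 1`). -/
def layerVerts (S : Set Pt) (E : Set (Sym2 Pt)) (i : ℕ) : Set Pt :=
  outerVerts (peel^[i - 1] (S, E)).1 (peel^[i - 1] (S, E)).2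

/-- The edges of the `i`-th cactus layer (`i ≥ 1`). -/
def layerEdges (S : Set Pt) (E : Set (Sym2 Pt)) (i : ℕ) : Set (Sym2 Pt) :=
  outerEdges (peel^[i - 1] (S, E)).1 (peel^[i - 1] (S, E)).2

/-- The layer index of a vertex: the (first) layer containing it. -/
def lind (S : Set Pt) (E : Set (Sym2 Pt)) (v : Pt) : ℕ :=
  sInf {i | 1 ≤ i ∧ v ∈ layerVerts S E i}

/-- The outerplanar index: the number of nonempty cactus layers. -/
def outerplanarIndex (S : Set Pt) (E : Set (Sym2 Pt)) : ℕ :=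
  {i : ℕ | 1 ≤ i ∧ (layerVerts S E i).Nonempty}.ncard

/-- Adjacency in the plane graph with edge set `E`. -/
def Adj (E : Set (Sym2 Pt)) (p q : Pt) : Prop := p ≠ q ∧ s(p, q) ∈ E

/-- The abstract simple graph underlying the edge set `E`. -/
def graphOf (E : Set (Sym2 Pt)) : SimpleGraph Pt where
  Adj p q := p ≠ q ∧ s(p, q) ∈ E
  symm := ⟨by
    intro p q h
    exact ⟨h.1.symm, by rw [Sym2.eq_swap]; exact h.2⟩⟩
  loopless := ⟨fun p h => h.1 rfl⟩

end

/-!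
Parts (a) and (b) are pigeonhole and minimality: layers `2, …, m + 1` are pairwise disjoint
subsets of `S`, so they cannot all have more than `⌊n/m⌋` vertices.

For (c), the layer index grows by at most one along an edge `pq`. Say `p` lies on layer `k + 1`.
Deleting that layer leaves a plane graph whose edges avoid `p` and meet the segment `pq` at most
in `q`. Near `p` there are points of the old unbounded face, which stay in the new unbounded face;
the half-open segment from `p` to `q` is a connected set joining them to `q`, so `q` lies on the
new unbounded face, i.e. on layer at most `k + 2`. A walk from layer 1 to a layer deeper than
`i*` therefore visits layer `i*`, by the discrete intermediate value theorem.
-/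

open Set

lemma Finset.exists_ncard_le_div_of_pairwiseDisjoint {ι α : Type*} {s : Finset ι}
    (hs : s.Nonempty) {t : ι → Set α} {U : Set α} (hU : U.Finite)
    (hdisj : (s : Set ι).PairwiseDisjoint t) (hsub : ∀ i ∈ s, t i ⊆ U) :
    ∃ i ∈ s, (t i).ncard ≤ U.ncard / s.card := by
  have hsum : ∑ i ∈ s, (t i).ncard ≤ U.ncard := by
    rw [← finsum_mem_coe_finset,
      ← s.finite_toSet.ncard_biUnion (fun i hi => hU.subset (hsub i hi)) hdisj]
    exact ncard_le_ncard (iUnion₂_subset hsub) hU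
  obtain ⟨i, hi, hlt⟩ : ∃ i ∈ s, (t i).ncard < U.ncard / s.card + 1 := by
    refine Finset.exists_lt_of_sum_lt (hsum.trans_lt ?_)
    rw [Finset.sum_const, smul_eq_mul]
    exact Nat.lt_mul_div_succ _ hs.card_pos
  exact ⟨i, hi, Nat.lt_succ_iff.mp hlt⟩

lemma SimpleGraph.Walk.exists_mem_support_eq_of_le_of_lt {V : Type*} {G : SimpleGraph V}
    {f : V → ℕ} (hf : ∀ u v, G.Adj u v → f v ≤ f u + 1) {a b : V} (w : G.Walk a b) {k : ℕ}
    (ha : f a ≤ k) (hb : k < f b) : ∃ x ∈ w.support, f x = k := by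
  induction w with
  | nil => omega
  | @cons u v b huv w ih =>
    by_cases hv : f v ≤ k
    · obtain ⟨x, hx, hxk⟩ := ih hv hb
      exact ⟨x, List.mem_cons_of_mem _ hx, hxk⟩
    · exact ⟨u, w.support.mem_cons_self, by have := hf u v huv; omega⟩

lemma segOf_mk (p q : Pt) : segOf s(p, q) = segment ℝ p q := rfl

lemma isClosed_segOf (e : Sym2 Pt) : IsClosed (segOf e) := by
  induction e using Sym2.ind with
  | _ p q =>
    rw [segOf_mk, ← closure_openSegment (𝕜 := ℝ)]
    exact isClosed_closure

lemma isClosed_graphUnion {E : Set (Sym2 Pt)} (hE : E.Finite) : IsClosed (graphUnion E) :=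
  hE.isClosed_biUnion fun e _ => isClosed_segOf e

lemma graphUnion_mono {E F : Set (Sym2 Pt)} (h : F ⊆ E) : graphUnion F ⊆ graphUnion E :=
  biUnion_subset_biUnion_left h

lemma IsPlaneGraph.finite_edges {S : Set Pt} {E : Set (Sym2 Pt)} (hE : IsPlaneGraph S E)
    (hS : S.Finite) : E.Finite := by
  refine ((hS.prod hS).image (Function.uncurry Sym2.mk)).subset fun e he => ?_
  induction e using Sym2.ind with
  | _ p q =>
    exact ⟨(p, q), ⟨hE.2.1 _ he p (Sym2.mem_mk_left p q), hE.2.1 _ he q (Sym2.mem_mk_right p q)⟩,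
      rfl⟩

lemma compl_closedBall_subset_outerFace {U : Set Pt} {R : ℝ} (hR : 0 ≤ R)
    (hU : U ⊆ Metric.closedBall 0 R) : (Metric.closedBall (0 : Pt) R)ᶜ ⊆ outerFace U := by
  intro x hx
  rw [mem_compl_iff, Metric.mem_closedBall, dist_zero_right, not_le] at hx
  have hx0 : 0 < ‖x‖ := hR.trans_lt hx
  have hnorm : ∀ c : ℝ, 1 ≤ c → ‖c • x‖ = c * ‖x‖ := fun c hc => by
    rw [norm_smul, Real.norm_of_nonneg (by linarith)]
  set ray : Set Pt := (· • x) '' Ici (1 : ℝ)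
  have hray : ray ⊆ Uᶜ := by
    rintro _ ⟨c, hc, rfl⟩ hcU
    have := hU hcU
    rw [Metric.mem_closedBall, dist_zero_right, hnorm c hc] at this
    nlinarith [mem_Ici.mp hc]
  have hxray : x ∈ ray := ⟨1, self_mem_Ici, one_smul ℝ x⟩
  refine ⟨fun hxU => hray hxray hxU, fun hbdd => ?_⟩
  have hcont : Continuous (· • x : ℝ → Pt) := by fun_prop
  have hsub := (isPreconnected_Ici.image _ hcont.continuousOn).subset_connectedComponentIn
    hxray hray
  obtain ⟨C, hC⟩ := isBounded_iff_forall_norm_le.mp (hbdd.subset hsub)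
  have hxC : ‖x‖ ≤ C := hC x hxray
  have hc : 1 ≤ C / ‖x‖ + 1 := by have := div_nonneg (hx0.le.trans hxC) hx0.le; linarith
  have := hC _ ⟨_, hc, rfl⟩
  rw [hnorm _ hc, add_mul, div_mul_cancel₀ _ hx0.ne', one_mul] at this
  linarith

/-- A vertex of maximal norm lies on the unbounded face. -/
lemma outerVerts_nonempty {V : Set Pt} {F : Set (Sym2 Pt)} (hV : V.Finite) (hne : V.Nonempty)
    (hF : ∀ e ∈ F, ∀ p ∈ e, p ∈ V) : (outerVerts V F).Nonempty := by
  obtain ⟨v, hv, hmax⟩ := exists_max_image V (fun u : Pt => ‖u‖) hV hne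
  have hball : ∀ p ∈ V, p ∈ Metric.closedBall (0 : Pt) ‖v‖ := fun p hp => by
    rw [Metric.mem_closedBall, dist_zero_right]; exact hmax p hp
  have hU : graphUnion F ⊆ Metric.closedBall 0 ‖v‖ := by
    refine iUnion₂_subset fun e he => ?_
    induction e using Sym2.ind with
    | _ p q =>
      exact (convex_closedBall _ _).segment_subset (hball p (hF _ he p (Sym2.mem_mk_left p q)))
        (hball q (hF _ he q (Sym2.mem_mk_right p q)))
  refine ⟨v, hv, closure_mono (compl_closedBall_subset_outerFace (norm_nonneg v) hU) ?_⟩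
  have hfront : v ∈ frontier (Metric.closedBall (0 : Pt) ‖v‖) := by simp [frontier_closedBall']
  rw [frontier_eq_closure_inter_closure] at hfront
  exact hfront.2

lemma mem_outerFace_of_mem_closure {U V : Set Pt} (hV : IsClosed V) (hVU : V ⊆ U) {x : Pt}
    (hx : x ∈ closure (outerFace U)) (hxV : x ∉ V) : x ∈ outerFace V := by
  have hnhds : connectedComponentIn Vᶜ x ∈ nhds x :=
    hV.isOpen_compl.connectedComponentIn.mem_nhds (mem_connectedComponentIn hxV)
  obtain ⟨y, hyx, hy⟩ := mem_closure_iff_nhds.mp hx _ hnhds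
  refine ⟨hxV, fun hbdd => hy.2 (hbdd.subset ?_)⟩
  rw [connectedComponentIn_eq hyx]
  exact connectedComponentIn_mono y (compl_subset_compl.mpr hVU)

lemma subset_outerFace_of_isPreconnected {U C : Set Pt} (hC : IsPreconnected C) (hCU : C ⊆ Uᶜ)
    {x : Pt} (hxC : x ∈ C) (hx : x ∈ outerFace U) : C ⊆ outerFace U := fun _ hz =>
  ⟨hCU hz, connectedComponentIn_eq (hC.subset_connectedComponentIn hxC hCU hz) ▸ hx.2⟩

lemma segment_inter_graphUnion_subset {S : Set Pt} {E F : Set (Sym2 Pt)} (hE : IsPlaneGraph S E)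
    (hFE : F ⊆ E) {p q : Pt} (he : s(p, q) ∈ E) (hpF : ∀ f ∈ F, p ∉ f) :
    segment ℝ p q ∩ graphUnion F ⊆ {q} := by
  rintro z ⟨hzpq, hzF⟩
  obtain ⟨f, hf, hzf⟩ := mem_iUnion₂.mp hzF
  have hne : s(p, q) ≠ f := fun h => hpF f hf (h ▸ Sym2.mem_mk_left p q)
  obtain ⟨hz, hzf⟩ := hE.2.2 _ he f (hFE hf) hne ⟨hzpq, hzf⟩
  rcases Sym2.mem_iff.mp hz with rfl | rfl
  · exact absurd hzf (hpF f hf)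
  · rfl

lemma mem_closure_outerFace_of_adj {S : Set Pt} {E F : Set (Sym2 Pt)} (hE : IsPlaneGraph S E)
    (hF : F.Finite) (hFE : F ⊆ E) {p q : Pt} (he : s(p, q) ∈ E) (hpF : ∀ f ∈ F, p ∉ f)
    (hp : p ∈ closure (outerFace (graphUnion E))) : q ∈ closure (outerFace (graphUnion F)) := by
  have hpq : p ≠ q := fun h => hE.1 _ he (Sym2.mk_isDiag_iff.mpr h)
  have hinter := segment_inter_graphUnion_subset hE hFE he hpF
  have hpU : p ∉ graphUnion F := fun h => hpq (hinter ⟨left_mem_segment ℝ p q, h⟩)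
  have hseg : openSegment ℝ p q ⊆ (graphUnion F)ᶜ := fun z hz hzF =>
    hpq (right_mem_openSegment_iff.mp
      ((hinter ⟨openSegment_subset_segment ℝ p q hz, hzF⟩ : z = q) ▸ hz))
  have hC : IsPreconnected (insert p (openSegment ℝ p q)) :=
    (convex_openSegment p q).isPreconnected.subset_closure (subset_insert _ _)
      (insert_subset (closure_openSegment (𝕜 := ℝ) p q ▸ left_mem_segment ℝ p q) subset_closure)
  have hCF : insert p (openSegment ℝ p q) ⊆ outerFace (graphUnion F) :=
    subset_outerFace_of_isPreconnected hC (insert_subset hpU hseg) (mem_insert p _)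
      (mem_outerFace_of_mem_closure (isClosed_graphUnion hF) (graphUnion_mono hFE) hp hpU)
  have hq : q ∈ closure (openSegment ℝ p q) :=
    closure_openSegment (𝕜 := ℝ) p q ▸ right_mem_segment ℝ p q
  exact closure_mono ((subset_insert _ _).trans hCF) hq

section Layers

variable {S : Set Pt} {E : Set (Sym2 Pt)}

lemma isPlaneGraph_peel {G : Set Pt × Set (Sym2 Pt)} (hG : IsPlaneGraph G.1 G.2) :
    IsPlaneGraph (peel G).1 (peel G).2 :=
  ⟨fun e he => hG.1 e he.1, fun e he p hp => ⟨hG.2.1 e he.1 p hp, he.2 p hp⟩,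
    fun e he f hf => hG.2.2 e he.1 f hf.1⟩

lemma isPlaneGraph_peel_iterate (hE : IsPlaneGraph S E) (k : ℕ) :
    IsPlaneGraph (peel^[k] (S, E)).1 (peel^[k] (S, E)).2 := by
  induction k with
  | zero => exact hE
  | succ k ih => rw [Function.iterate_succ_apply']; exact isPlaneGraph_peel ih

lemma layerVerts_succ (k : ℕ) :
    layerVerts S E (k + 1) = outerVerts (peel^[k] (S, E)).1 (peel^[k] (S, E)).2 := rfl

lemma mem_peel_iterate_fst_iff {v : Pt} {k : ℕ} :
    v ∈ (peel^[k] (S, E)).1 ↔ v ∈ S ∧ ∀ j < k, v ∉ layerVerts S E (j + 1) := by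
  induction k with
  | zero => simp
  | succ k ih =>
    rw [Function.iterate_succ_apply', Nat.forall_lt_succ_right, ← and_assoc, ← ih,
      layerVerts_succ]
    rfl

lemma mem_peel_iterate_snd_iff {e : Sym2 Pt} {k : ℕ} :
    e ∈ (peel^[k] (S, E)).2 ↔ e ∈ E ∧ ∀ j < k, ∀ p ∈ e, p ∉ layerVerts S E (j + 1) := by
  induction k with
  | zero => simp
  | succ k ih =>
    rw [Function.iterate_succ_apply', Nat.forall_lt_succ_right, ← and_assoc, ← ih,
      layerVerts_succ]
    rfl

lemma peel_iterate_snd_subset (k : ℕ) : (peel^[k + 1] (S, E)).2 ⊆ (peel^[k] (S, E)).2 := by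
  rw [Function.iterate_succ_apply']
  exact fun e he => he.1

lemma layerVerts_subset (i : ℕ) : layerVerts S E i ⊆ S := fun _ hv =>
  (mem_peel_iterate_fst_iff.mp hv.1).1

lemma lind_eq_of_mem_layerVerts {v : Pt} {i : ℕ} (hi : 1 ≤ i) (hv : v ∈ layerVerts S E i) :
    lind S E v = i := by
  obtain ⟨hpos, hvl⟩ : 1 ≤ lind S E v ∧ v ∈ layerVerts S E (lind S E v) :=
    Nat.sInf_mem (s := {i | 1 ≤ i ∧ v ∈ layerVerts S E i}) ⟨i, hi, hv⟩
  refine le_antisymm (Nat.sInf_le ⟨hi, hv⟩) (not_lt.mp fun hlt => ?_)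
  exact (mem_peel_iterate_fst_iff.mp hv.1).2 (lind S E v - 1) (by omega)
    (by rwa [Nat.sub_add_cancel hpos])

lemma mem_layerVerts_lind {v : Pt} (hv : 1 ≤ lind S E v) : v ∈ layerVerts S E (lind S E v) :=
  (Nat.sInf_mem (Nat.nonempty_of_pos_sInf hv)).2

lemma layerVerts_disjoint {i j : ℕ} (hi : 1 ≤ i) (hj : 1 ≤ j) (hij : i ≠ j) :
    Disjoint (layerVerts S E i) (layerVerts S E j) :=
  disjoint_left.mpr fun _ hvi hvj =>
    hij ((lind_eq_of_mem_layerVerts hi hvi).symm.trans (lind_eq_of_mem_layerVerts hj hvj))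

lemma mem_peel_iterate_fst_of_lt_lind {v : Pt} {k : ℕ} (hv : v ∈ S) (hk : k < lind S E v) :
    v ∈ (peel^[k] (S, E)).1 :=
  mem_peel_iterate_fst_iff.mpr ⟨hv, fun j hj hvj => by
    have := lind_eq_of_mem_layerVerts (Nat.succ_pos j) hvj; omega⟩

lemma mem_peel_iterate_snd_of_lt_lind {e : Sym2 Pt} {k : ℕ} (he : e ∈ E)
    (hk : ∀ p ∈ e, k < lind S E p) : e ∈ (peel^[k] (S, E)).2 :=
  mem_peel_iterate_snd_iff.mpr ⟨he, fun j hj p hp hpj => by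
    have := lind_eq_of_mem_layerVerts (Nat.succ_pos j) hpj; have := hk p hp; omega⟩

/-- Each peeling step removes at least one vertex while vertices remain. -/
lemma peel_iterate_ncard_eq_empty (hS : S.Finite) (hE : IsPlaneGraph S E) :
    (peel^[S.ncard] (S, E)).1 = ∅ := by
  have hfin : ∀ k, (peel^[k] (S, E)).1.Finite := fun k =>
    hS.subset fun _ hv => (mem_peel_iterate_fst_iff.mp hv).1
  have hcard : ∀ k, (peel^[k] (S, E)).1.ncard ≤ S.ncard - k := by
    intro k
    induction k with
    | zero => rfl
    | succ k ih =>
      rcases (peel^[k] (S, E)).1.eq_empty_or_nonempty with hemp | hne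
      · rw [Function.iterate_succ_apply']
        simp [peel, hemp]
      · obtain ⟨w, hw⟩ := outerVerts_nonempty (hfin k) hne (isPlaneGraph_peel_iterate hE k).2.1
        have hlt : (peel^[k + 1] (S, E)).1.ncard < (peel^[k] (S, E)).1.ncard := by
          rw [Function.iterate_succ_apply']
          exact ncard_lt_ncard ⟨sdiff_subset, fun h => (h hw.1).2 hw⟩ (hfin k)
        omega
  exact (ncard_eq_zero (hfin _)).mp (by have := hcard S.ncard; omega)

lemma one_le_lind (hS : S.Finite) (hE : IsPlaneGraph S E) {v : Pt} (hv : v ∈ S) :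
    1 ≤ lind S E v := by
  by_contra! h
  have hv' : v ∈ (peel^[S.ncard] (S, E)).1 := mem_peel_iterate_fst_iff.mpr ⟨hv, fun j _ hvj => by
    have := lind_eq_of_mem_layerVerts (Nat.succ_pos j) hvj; omega⟩
  simp [peel_iterate_ncard_eq_empty hS hE] at hv'

lemma lind_le_lind_add_one (hS : S.Finite) (hE : IsPlaneGraph S E) {p q : Pt}
    (hpq : (graphOf E).Adj p q) : lind S E q ≤ lind S E p + 1 := by
  obtain ⟨-, he⟩ := hpq
  have hp : p ∈ S := hE.2.1 _ he p (Sym2.mem_mk_left p q)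
  have hq : q ∈ S := hE.2.1 _ he q (Sym2.mem_mk_right p q)
  by_contra! hlt
  obtain ⟨k, hk⟩ := Nat.exists_eq_add_one.mpr (one_le_lind hS hE hp)
  have hpk : p ∈ layerVerts S E (k + 1) := hk ▸ mem_layerVerts_lind (by omega)
  have hek : s(p, q) ∈ (peel^[k] (S, E)).2 :=
    mem_peel_iterate_snd_of_lt_lind he fun x hx => by
      rcases Sym2.mem_iff.mp hx with rfl | rfl <;> omega
  have hqk : q ∈ layerVerts S E (k + 2) :=
    ⟨mem_peel_iterate_fst_of_lt_lind hq (by omega),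
      mem_closure_outerFace_of_adj (isPlaneGraph_peel_iterate hE k)
        ((hE.finite_edges hS).subset fun _ hf => (mem_peel_iterate_snd_iff.mp hf).1)
        (peel_iterate_snd_subset k) hek
        (fun f hf hpf => (mem_peel_iterate_snd_iff.mp hf).2 k (lt_add_one k) p hpf hpk) hpk.2⟩
  have := lind_eq_of_mem_layerVerts (by omega) hqk
  omega

end Layers

theorem peripheral_layer_separation_general
    (S : Set Pt) (hfin : S.Finite)
    (E : Set (Sym2 Pt)) (hT : IsTriangulation S E)
    (m : ℕ) (hm : 1 ≤ m) :
    (∃ i : ℕ, 2 ≤ i ∧ i ≤ m + 1 ∧ (layerVerts S E i).ncard ≤ S.ncard / m) ∧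
    (∀ j : ℕ, 2 ≤ j →
        j < sInf {i | 2 ≤ i ∧ i ≤ m + 1 ∧ (layerVerts S E i).ncard ≤ S.ncard / m} →
        S.ncard / m + 1 ≤ (layerVerts S E j).ncard) ∧
    (∀ a b : Pt, ∀ w : (graphOf E).Walk a b,
        a ∈ layerVerts S E 1 →
        sInf {i | 2 ≤ i ∧ i ≤ m + 1 ∧ (layerVerts S E i).ncard ≤ S.ncard / m} < lind S E b →
        ∃ x ∈ w.support,
          x ∈ layerVerts S E
            (sInf {i | 2 ≤ i ∧ i ≤ m + 1 ∧ (layerVerts S E i).ncard ≤ S.ncard / m})) := by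
  set I := {i | 2 ≤ i ∧ i ≤ m + 1 ∧ (layerVerts S E i).ncard ≤ S.ncard / m}
  have hI : I.Nonempty := by
    obtain ⟨i, hi, hsmall⟩ := (Finset.Icc 2 (m + 1)).exists_ncard_le_div_of_pairwiseDisjoint
      (Finset.nonempty_Icc.mpr (by omega)) hfin
      (fun i hi j hj hij => layerVerts_disjoint (one_le_two.trans (Finset.mem_Icc.mp hi).1)
        (one_le_two.trans (Finset.mem_Icc.mp hj).1) hij)
      (fun i _ => layerVerts_subset i)
    rw [Nat.card_Icc, show m + 1 + 1 - 2 = m by omega] at hsmall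
    exact ⟨i, (Finset.mem_Icc.mp hi).1, (Finset.mem_Icc.mp hi).2, hsmall⟩
  obtain ⟨htwo, hle, -⟩ : sInf I ∈ I := Nat.sInf_mem hI
  refine ⟨hI, fun j hj hlt => ?_, fun a b w ha hb => ?_⟩
  · by_contra! hsmall
    exact Nat.notMem_of_lt_sInf hlt ⟨hj, by omega, by omega⟩
  · obtain ⟨x, hx, hxI⟩ := w.exists_mem_support_eq_of_le_of_lt
      (fun u v => lind_le_lind_add_one hfin hT.1)
      (by rw [lind_eq_of_mem_layerVerts le_rfl ha]; omega) hb
    exact ⟨x, hx, hxI ▸ mem_layerVerts_lind (by omega)⟩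

/-- existence of a small peripheral layer, minimality of the first small layer,
and the separation property of that layer. -/
theorem peripheral_layer_separation
    (S : Set Pt) (hfin : S.Finite) (hgp : GenPos S)
    (E : Set (Sym2 Pt)) (hT : IsTriangulation S E)
    (m : ℕ) (hm : 1 ≤ m) (hop : m + 2 ≤ outerplanarIndex S E) :
    (∃ i : ℕ, 2 ≤ i ∧ i ≤ m + 1 ∧ (layerVerts S E i).ncard ≤ S.ncard / m) ∧
    (∀ j : ℕ, 2 ≤ j →
        j < sInf {i | 2 ≤ i ∧ i ≤ m + 1 ∧ (layerVerts S E i).ncard ≤ S.ncard / m} →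
        S.ncard / m + 1 ≤ (layerVerts S E j).ncard) ∧
    (∀ a b : Pt, ∀ w : (graphOf E).Walk a b,
        a ∈ layerVerts S E 1 →
        sInf {i | 2 ≤ i ∧ i ≤ m + 1 ∧ (layerVerts S E i).ncard ≤ S.ncard / m} < lind S E b →
        ∃ x ∈ w.support,
          x ∈ layerVerts S E
            (sInf {i | 2 ≤ i ∧ i ≤ m + 1 ∧ (layerVerts S E i).ncard ≤ S.ncard / m})) :=
  peripheral_layer_separation_general S hfin E hT m hm
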